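/- With g(1/k) = 2^(2k-2)·(k!)²/(2k)!, there exists an integer k₀ ≤ 62460059 such that for all integers k ≥ k₀, g(1/k)/(1 + log 4 + log g(1/k)) ≥ 256. -/

import Mathlib

/-!
From `(2k+2)² / (2k+1)² ≥ (2k+3) / (2k+1)` and the recurrence
`g(1/(k+1)) = g(1/k) · (2k+2)/(2k+1)`, the square `g(1/k)²` grows at least like `(2k+1)/12`,
so `g(1/k) ≥ 3226` for `k ≥ 62460059`. On the other hand `x ≥ 256 (1 + log 4 + log x)` once
`x ≥ 3226`, by the tangent-line bound `log x ≤ log 3226 + x/3226 - 1`.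
-/

open Real

/-- `g(1/k) = 2^(2k-2)·(k!)²/(2k)!`. -/
noncomputable def gOfRec (k : ℕ) : ℝ :=
  (2:ℝ) ^ (2 * (k : ℝ) - 2) * (Nat.factorial k : ℝ) ^ 2 / (Nat.factorial (2 * k) : ℝ)

lemma gOfRec_pos (k : ℕ) : 0 < gOfRec k := by
  unfold gOfRec
  positivity

lemma gOfRec_succ (k : ℕ) :
    gOfRec (k + 1) = gOfRec k * (2 * k + 2) / (2 * k + 1) := by
  have hpow : (2 : ℝ) ^ (2 * ((k : ℝ) + 1) - 2) = 2 ^ (2 * (k : ℝ) - 2) * 4 := by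
    rw [show 2 * ((k : ℝ) + 1) - 2 = (2 * k - 2) + 2 by ring, rpow_add two_pos]
    norm_num
  have hfact : ((2 * (k + 1)).factorial : ℝ) = (2 * k + 2) * ((2 * k + 1) * (2 * k).factorial) := by
    rw [show 2 * (k + 1) = (2 * k + 1) + 1 by ring, Nat.factorial_succ, Nat.factorial_succ]
    push_cast
    ring
  unfold gOfRec
  push_cast [hpow, hfact, Nat.factorial_succ]
  field_simp
  ring

lemma two_mul_add_one_le_twelve_mul_gOfRec_sq {k : ℕ} (hk : 1 ≤ k) :
    2 * (k : ℝ) + 1 ≤ 12 * gOfRec k ^ 2 := by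
  induction k, hk using Nat.le_induction with
  | base => norm_num [gOfRec]
  | succ n _ ih =>
    rw [gOfRec_succ, div_pow, mul_pow, mul_div_assoc', le_div_iff₀ (by positivity)]
    push_cast
    nlinarith [sq_nonneg ((n : ℝ) + 1), gOfRec_pos n]

lemma log_le_log_add_div_sub_one {a b : ℝ} (ha : 0 < a) (hb : 0 < b) :
    log b ≤ log a + b / a - 1 := by
  have h := log_le_sub_one_of_pos (div_pos hb ha)
  rw [log_div hb.ne' ha.ne'] at h
  linarith

lemma log_four_lt : log 4 < 1.39 := by
  rw [show (4 : ℝ) = 2 ^ 2 by norm_num, log_pow]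
  linarith [log_two_lt_d9]

lemma log_3226_le : log 3226 ≤ 9 := by
  rw [log_le_iff_le_exp (by norm_num)]
  calc (3226 : ℝ) ≤ 2.7 ^ 9 := by norm_num
    _ ≤ exp 1 ^ 9 := pow_le_pow_left₀ (by norm_num) (by linarith [exp_one_gt_d9]) 9
    _ = exp 9 := by rw [← exp_nat_mul]; norm_num

lemma le_div_one_add_log_four_add_log {x : ℝ} (hx : 3226 ≤ x) :
    256 ≤ x / (1 + log 4 + log x) := by
  have hlog := log_le_log_add_div_sub_one (by norm_num : (0 : ℝ) < 3226) (by linarith : 0 < x)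
  have hden : 0 < 1 + log 4 + log x := by
    linarith [log_pos (by norm_num : (1 : ℝ) < 4), log_pos (by linarith : 1 < x)]
  rw [le_div_iff₀ hden]
  linarith [log_four_lt, log_3226_le]

/-- There exists an integer `k₀ ≤ 62460059` such that for all integers `k ≥ k₀`,
`g(1/k)/(1 + log 4 + log g(1/k)) ≥ 256`. -/
theorem numerical_threshold :
    ∃ k₀ : ℕ, 1 ≤ k₀ ∧ k₀ ≤ 62460059 ∧
      ∀ k : ℕ, k₀ ≤ k →
        256 ≤ gOfRec k / (1 + Real.log 4 + Real.log (gOfRec k)) := by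
  refine ⟨62460059, by norm_num, le_rfl, fun k hk => le_div_one_add_log_four_add_log ?_⟩
  have hsq := two_mul_add_one_le_twelve_mul_gOfRec_sq (le_trans (by norm_num) hk)
  have hk' : (62460059 : ℝ) ≤ k := by exact_mod_cast hk
  -- 12 · 3226² ≤ 2 · 62460059 + 1
  nlinarith [gOfRec_pos k]
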